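/- arXiv:quant-ph/0507130 — 6 statements merged into one kernel-verified Lean document; each statement's English description precedes it below -/
import Mathlib

section
/- For all p, q, p', q' ∈ ZMod d, the trace of U_{p,q}ᴴ · U_{p',q'} equals d if (p,q) = (p',q') and equals 0 otherwise. -/
open Matrix BigOperators

/-- ω = exp(2πi/d). -/
noncomputable def omega (d : ℕ) : ℂ := Complex.exp (2 * Real.pi * Complex.I / d)

/-- The Weyl–Heisenberg matrix `U_{p,q}`. -/
noncomputable def WH (d : ℕ) [NeZero d] (p q : ZMod d) : Matrix (ZMod d) (ZMod d) ℂ :=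
  fun j k => if j = k + p then omega d ^ (q.val * k.val) else 0

/-! The entries of `U_{p,q}` are values `ψ (q * k)` of the standard additive character
`ψ = ZMod.stdAddChar`, so `conj (ψ (q * k)) * ψ (q' * k) = ψ (k * (q' - q))`. The diagonal of
`U_{p,q}ᴴ * U_{p',q'}` vanishes unless `p = p'`, and then the trace is the character sum
`∑ k, ψ (k * (q' - q))`, which is `d` or `0` according as `q = q'` by orthogonality of characters. -/

theorem ZMod.star_stdAddChar {d : ℕ} [NeZero d] (a : ZMod d) :
    star (ZMod.stdAddChar a) = ZMod.stdAddChar (-a) := by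
  rw [ZMod.stdAddChar_apply, ZMod.stdAddChar_apply, AddChar.map_neg_eq_inv,
    Circle.coe_inv_eq_conj]
  rfl

theorem omega_pow_eq_stdAddChar (d : ℕ) [NeZero d] (n : ℕ) :
    omega d ^ n = ZMod.stdAddChar (n : ZMod d) := by
  rw [ZMod.stdAddChar_apply, ZMod.toCircle_natCast, omega, ← Complex.exp_nat_mul]
  ring_nf

theorem WH_apply (d : ℕ) [NeZero d] (p q j k : ZMod d) :
    WH d p q j k = if j = k + p then ZMod.stdAddChar (q * k) else 0 := by
  rw [WH, omega_pow_eq_stdAddChar, Nat.cast_mul, ZMod.natCast_zmod_val, ZMod.natCast_zmod_val]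

theorem conjTranspose_WH_mul_WH_apply_self (d : ℕ) [NeZero d] (p q p' q' k : ZMod d) :
    ((WH d p q)ᴴ * WH d p' q') k k =
      if p = p' then ZMod.stdAddChar (k * (q' - q)) else 0 := by
  have hterm : ∀ j, star (WH d p q j k) * WH d p' q' j k =
      if j = k + p then (if p = p' then ZMod.stdAddChar (k * (q' - q)) else 0) else 0 := by
    intro j
    by_cases hj : j = k + p
    · by_cases hp : p = p'
      · subst hp
        simp only [WH_apply, if_pos hj, if_true, ZMod.star_stdAddChar,
          ← AddChar.map_add_eq_mul]
        ring_nf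
      · have hj' : j ≠ k + p' := fun h => hp (add_left_cancel (hj.symm.trans h))
        simp [WH_apply, hj', hp]
    · simp [WH_apply, hj]
  simp only [mul_apply, conjTranspose_apply, hterm, Finset.sum_ite_eq', Finset.mem_univ, if_true]

theorem weyl_heisenberg_trace_orthogonality (d : ℕ) [NeZero d] (p q p' q' : ZMod d) :
    Matrix.trace ((WH d p q)ᴴ * WH d p' q') =
      if (p, q) = (p', q') then (d : ℂ) else 0 := by
  simp only [trace, diag, conjTranspose_WH_mul_WH_apply_self]
  by_cases hp : p = p'
  · subst hp
    simp [AddChar.sum_mulShift _ (ZMod.isPrimitive_stdAddChar d), sub_eq_zero, eq_comm]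
  · simp [hp]
end

section
/- For all p, q, r, s ∈ ZMod d, the Bell vector |U_{r,s}⟩⟩ is an eigenvector of the Kronecker product U_{p,q} ⊗ conj(U_{p,q}) with eigenvalue ω^{r·q − p·s}; in particular, |1⟩⟩ (the Bell vector of the identity matrix) is invariant under U_{p,q} ⊗ conj(U_{p,q}) for all p, q. -/
open Matrix Kronecker BigOperators

/-- The Bell vector `|M⟩⟩` of a matrix `M`. -/
def bell (d : ℕ) [NeZero d] (M : Matrix (ZMod d) (ZMod d) ℂ) : ZMod d × ZMod d → ℂ :=
  fun jk => M jk.1 jk.2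

lemma omega_ne_zero (d : ℕ) : omega d ≠ 0 := Complex.exp_ne_zero _

lemma omega_pow_d (d : ℕ) [NeZero d] : omega d ^ (d : ℤ) = 1 := by
  rw [zpow_natCast, omega, ← Complex.exp_nat_mul]
  have hd : (d : ℂ) ≠ 0 := Nat.cast_ne_zero.mpr (NeZero.ne d)
  rw [mul_div_cancel₀ _ hd, Complex.exp_two_pi_mul_I]

lemma omega_zpow_eq (d : ℕ) [NeZero d] {a b : ℤ} (h : ((a : ZMod d)) = (b : ZMod d)) :
    omega d ^ a = omega d ^ b := by
  have hd : (d:ℤ) ∣ b - a := ((ZMod.intCast_eq_intCast_iff _ _ _).mp h).dvd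
  obtain ⟨k, hk⟩ := hd
  have hb : b = a + d * k := by linarith
  rw [hb, zpow_add₀ (omega_ne_zero d), _root_.zpow_mul, omega_pow_d, _root_.one_zpow, mul_one]

lemma conj_omega_pow (d : ℕ) (n : ℕ) :
    (starRingEnd ℂ) (omega d ^ n) = omega d ^ (-(n:ℤ)) := by
  rw [map_pow, omega, ← Complex.exp_conj]
  have : (starRingEnd ℂ) (2 * Real.pi * Complex.I / d) = -(2 * Real.pi * Complex.I / d) := by
    simp only [map_div₀, _root_.map_mul, Complex.conj_I, Complex.conj_ofReal, map_ofNat,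
      Complex.conj_natCast]
    ring
  rw [this, Complex.exp_neg, ← omega, _root_.zpow_neg, zpow_natCast, inv_pow]

/-- `|U_{r,s}⟩⟩` is an eigenvector of `U_{p,q} ⊗ conj(U_{p,q})` with eigenvalue
`ω^{r·q − p·s}`; in particular `|1⟩⟩` is invariant. -/
theorem bell_eigenvector (d : ℕ) [NeZero d] :
    (∀ p q r s : ZMod d,
      (WH d p q ⊗ₖ (WH d p q).map (starRingEnd ℂ)).mulVec (bell d (WH d r s)) =
        omega d ^ ((r.val * q.val : ℤ) - (p.val * s.val : ℤ)) • bell d (WH d r s)) ∧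
    (∀ p q : ZMod d,
      (WH d p q ⊗ₖ (WH d p q).map (starRingEnd ℂ)).mulVec
          (bell d (1 : Matrix (ZMod d) (ZMod d) ℂ)) =
        bell d (1 : Matrix (ZMod d) (ZMod d) ℂ)) := by
  have h1 : ∀ p q r s : ZMod d,
      (WH d p q ⊗ₖ (WH d p q).map (starRingEnd ℂ)).mulVec (bell d (WH d r s)) =
        omega d ^ ((r.val * q.val : ℤ) - (p.val * s.val : ℤ)) • bell d (WH d r s) := by
    intro p q r s
    funext jk
    obtain ⟨j1, j2⟩ := jk
    have hiff : ∀ j k : ZMod d, (j = k + p) = (k = j - p) := fun j k =>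
      propext (by rw [eq_sub_iff_add_eq, eq_comm])
    have hiffr : ∀ j k : ZMod d, (j = k + r) = (k = j - r) := fun j k =>
      propext (by rw [eq_sub_iff_add_eq, eq_comm])
    simp only [mulVec, dotProduct, Fintype.sum_prod_type, kroneckerMap_apply,
      Matrix.map_apply, WH, bell, Pi.smul_apply, smul_eq_mul, hiff, hiffr,
      apply_ite (starRingEnd ℂ), map_zero, ite_mul, zero_mul, mul_ite, mul_zero,
      Finset.sum_ite_eq', Finset.mem_univ, if_true]
    simp only [sub_eq_iff_eq_add, ite_mul, zero_mul, mul_ite, mul_zero,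
      Finset.sum_ite_eq', Finset.mem_univ, if_true]
    have hc : (j2 - p + r = j1 - p) = (j2 = j1 - r) :=
      propext ⟨fun h => by linear_combination h, fun h => by linear_combination h⟩
    rw [add_sub_cancel_right]
    simp only [hc]
    by_cases h : j2 = j1 - r
    · rw [if_pos h, if_pos h, conj_omega_pow]
      simp only [← zpow_natCast (omega d)]
      rw [← zpow_add₀ (omega_ne_zero d), ← zpow_add₀ (omega_ne_zero d),
        ← zpow_add₀ (omega_ne_zero d)]
      refine omega_zpow_eq d ?_
      push_cast [ZMod.natCast_val, ZMod.cast_id]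
      ring
    · rw [if_neg h, if_neg h]
  refine ⟨h1, fun p q => ?_⟩
  have hWH : WH d 0 0 = 1 := by
    funext j k
    simp [WH, Matrix.one_apply]
  have h := h1 p q 0 0
  rw [hWH] at h
  simpa using h
end

section
/- Let M be a matrix indexed by ZMod d × ZMod d × ZMod d that commutes with U_{p,q} ⊗ U_{p,q} ⊗ conj(U_{p,q}) for all p, q ∈ ZMod d. Then the partial trace of M over the first two tensor factors is proportional to the identity: for all k, k' ∈ ZMod d, Σ_{i,j} M_{(i,j,k),(i,j,k')} = (Tr M / d) · δ_{k,k'}. -/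
open Matrix Kronecker BigOperators

noncomputable def chi (d : ℕ) (a : ZMod d) : ℂ := omega d ^ a.val

lemma omega_prim (d : ℕ) [NeZero d] : IsPrimitiveRoot (omega d) d :=
  Complex.isPrimitiveRoot_exp d (NeZero.ne d)

lemma omega_pow_mod (d : ℕ) [NeZero d] (n : ℕ) : omega d ^ (n % d) = omega d ^ n := by
  conv_rhs => rw [← Nat.mod_add_div n d, pow_add, pow_mul, (omega_prim d).pow_eq_one, one_pow, mul_one]

lemma chi_add (d : ℕ) [NeZero d] (a b : ZMod d) : chi d (a + b) = chi d a * chi d b := by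
  rw [chi, ZMod.val_add, omega_pow_mod, pow_add]; rfl

lemma chi_zero (d : ℕ) [NeZero d] : chi d 0 = 1 := by
  simp [chi, ZMod.val_zero]

lemma omega_val_mul (d : ℕ) [NeZero d] (a b : ZMod d) :
    omega d ^ (a.val * b.val) = chi d (a * b) := by
  rw [chi, ZMod.val_mul, omega_pow_mod]

lemma chi_neg_mul (d : ℕ) [NeZero d] (a : ZMod d) : chi d (-a) * chi d a = 1 := by
  rw [← chi_add, neg_add_cancel, chi_zero]

lemma conj_chi (d : ℕ) [NeZero d] (a : ZMod d) :
    (starRingEnd ℂ) (chi d a) = chi d (-a) := by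
  have hconj : (starRingEnd ℂ) (omega d) = (omega d)⁻¹ := by
    rw [omega, ← Complex.exp_conj, ← Complex.exp_neg]
    congr 1
    simp [Complex.ext_iff, neg_div]
  have h2 := chi_neg_mul d a
  have : (starRingEnd ℂ) (chi d a) = (chi d a)⁻¹ := by
    rw [chi, map_pow, hconj, inv_pow]
  rw [this, eq_comm, chi]
  exact eq_inv_of_mul_eq_one_left h2

lemma chi_inj (d : ℕ) [NeZero d] {a b : ZMod d} (h : chi d a = chi d b) : a = b := by
  have := (omega_prim d).pow_inj (ZMod.val_lt a) (ZMod.val_lt b) h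
  exact ZMod.val_injective d this

lemma mul_W_apply (d : ℕ) [NeZero d]
    (M : Matrix (ZMod d × ZMod d × ZMod d) (ZMod d × ZMod d × ZMod d) ℂ)
    (p q : ZMod d) (x : ZMod d × ZMod d × ZMod d) (i' j' k' : ZMod d) :
    (M * (WH d p q ⊗ₖ (WH d p q ⊗ₖ (WH d p q).map (starRingEnd ℂ)))) x (i', j', k') =
      M x (i' + p, j' + p, k' + p) *
        (chi d (q * i') * (chi d (q * j') * chi d (-(q * k')))) := by
  rw [Matrix.mul_apply, Fintype.sum_prod_type]
  simp only [Fintype.sum_prod_type, Matrix.kroneckerMap_apply, WH, Matrix.map_apply,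
    apply_ite (starRingEnd ℂ), map_zero, mul_ite, ite_mul, mul_zero, zero_mul,
    Finset.sum_ite_eq', Finset.mem_univ, if_true]
  rw [omega_val_mul, omega_val_mul, omega_val_mul, conj_chi]

lemma W_mul_apply (d : ℕ) [NeZero d]
    (M : Matrix (ZMod d × ZMod d × ZMod d) (ZMod d × ZMod d × ZMod d) ℂ)
    (p q : ZMod d) (x1 x2 x3 : ZMod d) (y : ZMod d × ZMod d × ZMod d) :
    ((WH d p q ⊗ₖ (WH d p q ⊗ₖ (WH d p q).map (starRingEnd ℂ))) * M) (x1, x2, x3) y =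
      (chi d (q * (x1 - p)) * (chi d (q * (x2 - p)) * chi d (-(q * (x3 - p))))) *
        M (x1 - p, x2 - p, x3 - p) y := by
  rw [Matrix.mul_apply, Fintype.sum_prod_type]
  have hcond : ∀ a z : ZMod d, (a = z + p) = (z = a - p) := by
    intro a z
    simp only [eq_iff_iff]
    constructor <;> intro h <;> subst h <;> ring
  simp only [Fintype.sum_prod_type, Matrix.kroneckerMap_apply, WH, Matrix.map_apply, hcond,
    apply_ite (starRingEnd ℂ), map_zero, mul_ite, ite_mul, mul_zero, zero_mul,
    Finset.sum_ite_eq', Finset.mem_univ, if_true]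
  rw [omega_val_mul, omega_val_mul, omega_val_mul, conj_chi]

lemma shift_inv (d : ℕ) [NeZero d]
    (M : Matrix (ZMod d × ZMod d × ZMod d) (ZMod d × ZMod d × ZMod d) ℂ)
    (hM : ∀ p q : ZMod d,
      M * (WH d p q ⊗ₖ (WH d p q ⊗ₖ (WH d p q).map (starRingEnd ℂ))) =
        (WH d p q ⊗ₖ (WH d p q ⊗ₖ (WH d p q).map (starRingEnd ℂ))) * M)
    (p i j k i' j' k' : ZMod d) :
    M (i + p, j + p, k + p) (i' + p, j' + p, k' + p) = M (i, j, k) (i', j', k') := by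
  have h := congrFun (congrFun (hM p 0) (i + p, j + p, k + p)) (i', j', k')
  rw [mul_W_apply, W_mul_apply] at h
  simpa [zero_mul, neg_zero, chi_zero, add_sub_cancel_right] using h

lemma select_rule (d : ℕ) [NeZero d]
    (M : Matrix (ZMod d × ZMod d × ZMod d) (ZMod d × ZMod d × ZMod d) ℂ)
    (hM : ∀ p q : ZMod d,
      M * (WH d p q ⊗ₖ (WH d p q ⊗ₖ (WH d p q).map (starRingEnd ℂ))) =
        (WH d p q ⊗ₖ (WH d p q ⊗ₖ (WH d p q).map (starRingEnd ℂ))) * M)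
    (i j k i' j' k' : ZMod d) (h : M (i, j, k) (i', j', k') ≠ 0) :
    i' + j' + k = i + j + k' := by
  have E := congrFun (congrFun (hM 0 1) (i, j, k)) (i', j', k')
  rw [mul_W_apply, W_mul_apply] at E
  simp only [one_mul, add_zero, sub_zero] at E
  apply chi_inj
  refine mul_right_cancel₀ h ?_
  have h1 := chi_neg_mul d k
  have h2 := chi_neg_mul d k'
  simp only [chi_add]
  linear_combination (chi d k * chi d k') * E +
    (chi d i * chi d j * chi d k' * M (i, j, k) (i', j', k')) * h1 -
    (chi d i' * chi d j' * chi d k * M (i, j, k) (i', j', k')) * h2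

/-- If `M` commutes with `U_{p,q} ⊗ U_{p,q} ⊗ conj(U_{p,q})` for all `p, q`, then its
partial trace over the first two factors is proportional to the identity, with
proportionality constant `Tr M / d`. -/
theorem partial_trace_of_commutant (d : ℕ) [NeZero d]
    (M : Matrix (ZMod d × ZMod d × ZMod d) (ZMod d × ZMod d × ZMod d) ℂ)
    (hM : ∀ p q : ZMod d,
      M * (WH d p q ⊗ₖ (WH d p q ⊗ₖ (WH d p q).map (starRingEnd ℂ))) =
        (WH d p q ⊗ₖ (WH d p q ⊗ₖ (WH d p q).map (starRingEnd ℂ))) * M) :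
    ∀ k k' : ZMod d,
      (∑ i : ZMod d, ∑ j : ZMod d, M (i, j, k) (i, j, k')) =
        (Matrix.trace M / d) * (if k = k' then 1 else 0) := by
  intro k k'
  by_cases hk : k = k'
  · subst hk
    rw [if_pos rfl, mul_one]
    -- all diagonal slices are equal
    have hS : ∀ k0 : ZMod d,
        (∑ i : ZMod d, ∑ j : ZMod d, M (i, j, k0) (i, j, k0)) =
          ∑ i : ZMod d, ∑ j : ZMod d, M (i, j, k) (i, j, k) := by
      intro k0
      set p := k - k0 with hp
      have hk0 : k0 + p = k := by rw [hp]; ring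
      have step : (∑ i : ZMod d, ∑ j : ZMod d, M (i, j, k0) (i, j, k0)) =
          ∑ i : ZMod d, ∑ j : ZMod d, M (i + p, j + p, k) (i + p, j + p, k) := by
        refine Finset.sum_congr rfl fun i _ => Finset.sum_congr rfl fun j _ => ?_
        rw [← hk0, shift_inv d M hM]
      rw [step]
      have hre : ∀ g : ZMod d → ℂ, (∑ i : ZMod d, g (i + p)) = ∑ i : ZMod d, g i :=
        fun g => Fintype.sum_equiv (Equiv.addRight p) _ _ (fun i => rfl)
      refine (hre fun i => ∑ j : ZMod d, M (i, j + p, k) (i, j + p, k)).trans ?_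
      exact Finset.sum_congr rfl fun i _ => hre (fun j => M (i, j, k) (i, j, k))
    have htr : Matrix.trace M =
        ∑ k0 : ZMod d, ∑ i : ZMod d, ∑ j : ZMod d, M (i, j, k0) (i, j, k0) := by
      rw [Matrix.trace]
      simp only [Matrix.diag, Fintype.sum_prod_type]
      calc (∑ i : ZMod d, ∑ j : ZMod d, ∑ k0 : ZMod d, M (i, j, k0) (i, j, k0))
          = ∑ i : ZMod d, ∑ k0 : ZMod d, ∑ j : ZMod d, M (i, j, k0) (i, j, k0) :=
            Finset.sum_congr rfl fun i _ => Finset.sum_comm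
        _ = ∑ k0 : ZMod d, ∑ i : ZMod d, ∑ j : ZMod d, M (i, j, k0) (i, j, k0) :=
            Finset.sum_comm
    have hfin : (∑ k0 : ZMod d, ∑ i : ZMod d, ∑ j : ZMod d, M (i, j, k0) (i, j, k0)) =
        (d : ℂ) * ∑ i : ZMod d, ∑ j : ZMod d, M (i, j, k) (i, j, k) := by
      rw [Finset.sum_congr rfl fun k0 _ => hS k0, Finset.sum_const, Finset.card_univ,
        ZMod.card, nsmul_eq_mul]
    rw [htr, hfin]
    exact (mul_div_cancel_left₀ _ (Nat.cast_ne_zero.mpr (NeZero.ne d))).symm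
  · rw [if_neg hk, mul_zero]
    refine Finset.sum_eq_zero fun i _ => Finset.sum_eq_zero fun j _ => ?_
    by_contra h
    exact hk (by
      have := select_rule d M hM i j k i j k' h
      exact add_left_cancel this)
end

section
/- (Theorem 2.) Let G be a group and U : G → Matrix (Fin d) (Fin d) ℂ a map with U(1) = 1, U(gh) = U(g)·U(h), each U(g) unitary, and acting irreducibly (every matrix commuting with all U(g) is a scalar multiple of the identity). Suppose Ψ : (Fin d)⁴ → ℂ is a unit vector satisfying the strong covariance condition (U(g) ⊗ U(g) ⊗ conj(U(g)) ⊗ conj(U(g))) Ψ = Ψ for all g ∈ G, and define R, indexed by (Fin d)³, by R_{(i,j,k),(i',j',k')} = d · Σ_l Ψ(i,j,k,l) · conj(Ψ(i',j',k',l)). Then there exists a matrix T with d³ rows and d columns such that Tᴴ·T = 1, R = T·Tᴴ (so R is an orthogonal projection of rank d), and (U(g) ⊗ U(g) ⊗ conj(U(g)))·T = T·U(g) for all g ∈ G; i.e., R is the projection onto an invariant subspace carrying a subrepresentation equivalent to U. -/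
/-!
Reshape `Ψ` into a `d³ × d` matrix `M`. Strong covariance says `π(g) M U(g)ᴴ = M`, i.e. `M`
intertwines `U` with the unitary representation `π`. Hence `MᴴM` commutes with every `U(g)` and
is a scalar by irreducibility; since `tr(MᴴM) = ‖Ψ‖² = 1`, that scalar is `1/d`. So
`T = √d M` is an isometric intertwiner, and `T Tᴴ = d M Mᴴ = R`.
-/

open Matrix Kronecker BigOperators

/-- The representation `π(g) = U(g) ⊗ U(g) ⊗ conj(U(g))` on `(ℂ^d)^⊗3`. -/
def pi3 {d : ℕ} {G : Type*} (U : G → Matrix (Fin d) (Fin d) ℂ) (g : G) :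
    Matrix (Fin d × Fin d × Fin d) (Fin d × Fin d × Fin d) ℂ :=
  U g ⊗ₖ (U g ⊗ₖ (U g).map (starRingEnd ℂ))

/-- The representation `U(g) ⊗ U(g) ⊗ conj(U(g)) ⊗ conj(U(g))` on `(ℂ^d)^⊗4`. -/
def pi4 {d : ℕ} {G : Type*} (U : G → Matrix (Fin d) (Fin d) ℂ) (g : G) :
    Matrix (Fin d × Fin d × Fin d × Fin d) (Fin d × Fin d × Fin d × Fin d) ℂ :=
  U g ⊗ₖ (U g ⊗ₖ ((U g).map (starRingEnd ℂ) ⊗ₖ (U g).map (starRingEnd ℂ)))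

namespace Matrix

variable {α β γ δ R : Type*}

/-- `Ψ` as a map from the last tensor factor to the first three; `splitLast Ψ * (splitLast Ψ)ᴴ`
is the partial trace of `|Ψ⟩⟨Ψ|` over the last factor. -/
def splitLast (Ψ : α × β × γ × δ → R) : Matrix (α × β × γ) δ R :=
  of fun p l => Ψ (p.1, p.2.1, p.2.2, l)

theorem splitLast_kronecker_mulVec [CommSemiring R] [Fintype α] [Fintype β] [Fintype γ]
    [Fintype δ] (A : Matrix α α R) (B : Matrix β β R) (C : Matrix γ γ R) (D : Matrix δ δ R)
    (Ψ : α × β × γ × δ → R) :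
    splitLast ((A ⊗ₖ (B ⊗ₖ (C ⊗ₖ D))) *ᵥ Ψ) = A ⊗ₖ (B ⊗ₖ C) * splitLast Ψ * Dᵀ := by
  ext ⟨i, j, k⟩ l
  simp only [splitLast, of_apply, mulVec, dotProduct, mul_apply, transpose_apply,
    kroneckerMap_apply, Fintype.sum_prod_type, Finset.sum_mul]
  conv_rhs =>
    rw [Finset.sum_comm]; enter [2, a]; rw [Finset.sum_comm]; enter [2, b]; rw [Finset.sum_comm]
  simp only [mul_assoc, mul_comm (D l _)]

theorem trace_conjTranspose_splitLast_mul_self {𝕜 : Type*} [RCLike 𝕜] [Fintype α] [Fintype β]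
    [Fintype γ] [Fintype δ] (Ψ : α × β × γ × δ → 𝕜) :
    ((splitLast Ψ)ᴴ * splitLast Ψ).trace = ((∑ x, ‖Ψ x‖ ^ 2 : ℝ) : 𝕜) := by
  rw [← star_vec_dotProduct_vec]
  simp only [dotProduct, vec, splitLast, of_apply, Pi.star_apply, Fintype.sum_prod_type]
  conv_lhs =>
    rw [Finset.sum_comm]; enter [2, a]; rw [Finset.sum_comm]; enter [2, b]; rw [Finset.sum_comm]
  push_cast
  simp only [RCLike.star_def, RCLike.conj_mul]

theorem map_star_mem_unitaryGroup {n : Type*} [Fintype n] [DecidableEq n] [CommRing R]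
    [StarRing R] {A : Matrix n n R} (hA : A ∈ unitaryGroup n R) :
    A.map star ∈ unitaryGroup n R := by
  rw [mem_unitaryGroup_iff'] at hA ⊢
  rw [star_eq_conjTranspose, ← transpose_conjTranspose, conjTranspose_conjTranspose,
    conjTranspose_transpose_eq_transpose_conjTranspose, ← transpose_mul, ← star_eq_conjTranspose,
    hA, transpose_one]

theorem commute_conjTranspose_mul_self_of_mul_eq_mul {m n : Type*} [Fintype m] [DecidableEq m]
    [Fintype n] [DecidableEq n] [CommRing R] [StarRing R] {P : Matrix m m R}
    {V : Matrix n n R} {M : Matrix m n R} (hP : P ∈ unitaryGroup m R)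
    (hV : V ∈ unitaryGroup n R) (h : P * M = M * V) : Commute (Mᴴ * M) V := by
  have hadj : Mᴴ * P = V * Mᴴ := by
    have h' : Mᴴ * Pᴴ = Vᴴ * Mᴴ := by simpa using congrArg conjTranspose h
    calc Mᴴ * P = V * Vᴴ * Mᴴ * P := by
          rw [← star_eq_conjTranspose, Unitary.mul_star_self_of_mem hV, Matrix.one_mul]
      _ = V * (Mᴴ * Pᴴ) * P := by rw [h', Matrix.mul_assoc V]
      _ = V * Mᴴ := by
          rw [Matrix.mul_assoc, Matrix.mul_assoc, ← star_eq_conjTranspose,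
            Unitary.star_mul_self_of_mem hP, Matrix.mul_one]
  calc Mᴴ * M * V = Mᴴ * P * M := by rw [Matrix.mul_assoc, ← h, Matrix.mul_assoc]
    _ = V * (Mᴴ * M) := by rw [hadj, Matrix.mul_assoc]

theorem card_nsmul_eq_one_of_eq_smul_one {n : Type*} [Fintype n] [DecidableEq n]
    [CommRing R] {X : Matrix n n R} {c : R} (hX : X = c • 1) (htr : X.trace = 1) :
    Fintype.card n • X = 1 := by
  rw [hX, trace_smul, trace_one, smul_eq_mul] at *
  rw [← Nat.cast_smul_eq_nsmul R, smul_smul, mul_comm, htr, one_smul]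

end Matrix

theorem strongly_covariant_is_extremal_general (d : ℕ) (G : Type*)
    (U : G → Matrix (Fin d) (Fin d) ℂ)
    (hUu : ∀ g : G, (U g)ᴴ * U g = 1)
    (hirr : ∀ X : Matrix (Fin d) (Fin d) ℂ,
      (∀ g : G, X * U g = U g * X) → ∃ c : ℂ, X = c • (1 : Matrix (Fin d) (Fin d) ℂ))
    (Ψ : Fin d × Fin d × Fin d × Fin d → ℂ)
    (hΨnorm : ∑ x : Fin d × Fin d × Fin d × Fin d, ‖Ψ x‖ ^ 2 = 1)
    (hΨcov : ∀ g : G, (pi4 U g).mulVec Ψ = Ψ)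
    (R : Matrix (Fin d × Fin d × Fin d) (Fin d × Fin d × Fin d) ℂ)
    (hR : ∀ i j k i' j' k' : Fin d,
      R (i, j, k) (i', j', k') =
        (d : ℂ) * ∑ l : Fin d, Ψ (i, j, k, l) * (starRingEnd ℂ) (Ψ (i', j', k', l))) :
    ∃ T : Matrix (Fin d × Fin d × Fin d) (Fin d) ℂ,
      Tᴴ * T = 1 ∧ R = T * Tᴴ ∧ ∀ g : G, pi3 U g * T = T * U g := by
  have hU g : U g ∈ unitaryGroup (Fin d) ℂ := mem_unitaryGroup_iff'.mpr (hUu g)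
  set M := splitLast Ψ
  have hint g : pi3 U g * M = M * U g := by
    have hcov : pi3 U g * M * (U g)ᴴ = M := by
      have := congrArg splitLast (hΨcov g)
      rwa [pi4, splitLast_kronecker_mulVec] at this
    conv_rhs => rw [← hcov]
    rw [Matrix.mul_assoc _ (U g)ᴴ, ← star_eq_conjTranspose, Unitary.star_mul_self_of_mem (hU g),
      Matrix.mul_one]
  have hpi3 g : pi3 U g ∈ unitaryGroup _ ℂ :=
    kronecker_mem_unitary (hU g) (kronecker_mem_unitary (hU g) (map_star_mem_unitaryGroup (hU g)))
  obtain ⟨c, hc⟩ := hirr (Mᴴ * M) fun g =>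
    commute_conjTranspose_mul_self_of_mul_eq_mul (hpi3 g) (hU g) (hint g)
  have hgram : d • (Mᴴ * M) = 1 := by
    simpa using card_nsmul_eq_one_of_eq_smul_one hc
      (by rw [trace_conjTranspose_splitLast_mul_self, hΨnorm, RCLike.ofReal_one])
  have hsqrt : Real.sqrt d * Real.sqrt d = d := Real.mul_self_sqrt d.cast_nonneg
  refine ⟨Real.sqrt d • M, ?_, ?_, fun g => by rw [Matrix.mul_smul, Matrix.smul_mul, hint]⟩
  · rw [conjTranspose_smul, star_trivial, Matrix.smul_mul, Matrix.mul_smul, smul_smul, hsqrt]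
    rwa [Nat.cast_smul_eq_nsmul]
  · ext ⟨i, j, k⟩ ⟨i', j', k'⟩
    rw [conjTranspose_smul, star_trivial, Matrix.smul_mul, Matrix.mul_smul, smul_smul, hsqrt, hR]
    simp [mul_apply, splitLast, M, Complex.real_smul]

/-- Theorem 2: if `Ψ` is a unit vector satisfying the strong covariance condition for an
irreducible unitary representation `U`, then `R = d·Tr₄|Ψ⟩⟨Ψ|` is an isometry times its
adjoint, i.e. a rank-`d` orthogonal projection onto an invariant subspace carrying a
subrepresentation equivalent to `U`. -/
theorem strongly_covariant_is_extremal (d : ℕ) (G : Type*) [Group G]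
    (U : G → Matrix (Fin d) (Fin d) ℂ)
    (hU1 : U 1 = 1)
    (hUm : ∀ g h : G, U (g * h) = U g * U h)
    (hUu : ∀ g : G, (U g)ᴴ * U g = 1)
    (hirr : ∀ X : Matrix (Fin d) (Fin d) ℂ,
      (∀ g : G, X * U g = U g * X) → ∃ c : ℂ, X = c • (1 : Matrix (Fin d) (Fin d) ℂ))
    (Ψ : Fin d × Fin d × Fin d × Fin d → ℂ)
    (hΨnorm : ∑ x : Fin d × Fin d × Fin d × Fin d, ‖Ψ x‖ ^ 2 = 1)
    (hΨcov : ∀ g : G, (pi4 U g).mulVec Ψ = Ψ)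
    (R : Matrix (Fin d × Fin d × Fin d) (Fin d × Fin d × Fin d) ℂ)
    (hR : ∀ i j k i' j' k' : Fin d,
      R (i, j, k) (i', j', k') =
        (d : ℂ) * ∑ l : Fin d, Ψ (i, j, k, l) * (starRingEnd ℂ) (Ψ (i', j', k', l))) :
    ∃ T : Matrix (Fin d × Fin d × Fin d) (Fin d) ℂ,
      Tᴴ * T = 1 ∧ R = T * Tᴴ ∧ ∀ g : G, pi3 U g * T = T * U g :=
  strongly_covariant_is_extremal_general d G U hUu hirr Ψ hΨnorm hΨcov R hR
end

section
/- (Optimality of the symmetric coefficients for qubit cloning of Pauli-invariant sets.) Let 1/3 ≤ F ≤ 1 be a real number. Over all (a₀, a₁, a₂, a₃) ∈ ℝ⁴ with aᵢ ≥ 0 for all i, a₀² + a₁² + a₂² + a₃² = 1, and a₀² + (a₁² + a₂² + a₃²)/3 = F, the maximum value of a₀ + a₁ + a₂ + a₃ equals √((3F − 1)/2) + 3·√((1 − F)/2), and it is attained exactly at a₀ = √((3F − 1)/2) and a₁ = a₂ = a₃ = √((1 − F)/2). -/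
/-- Optimality of the symmetric coefficients for qubit cloning of Pauli-invariant sets:
over nonnegative `(a₀,a₁,a₂,a₃)` with `Σ aᵢ² = 1` and `a₀² + (a₁²+a₂²+a₃²)/3 = F`, the
maximum of `a₀+a₁+a₂+a₃` is `√((3F−1)/2) + 3√((1−F)/2)`, attained exactly at
`a₀ = √((3F−1)/2)`, `a₁ = a₂ = a₃ = √((1−F)/2)`. -/
theorem qubit_cloning_optimal_coefficients (F : ℝ) (hF₁ : 1 / 3 ≤ F) (hF₂ : F ≤ 1) :
    IsGreatest
      {x : ℝ | ∃ a₀ a₁ a₂ a₃ : ℝ,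
        0 ≤ a₀ ∧ 0 ≤ a₁ ∧ 0 ≤ a₂ ∧ 0 ≤ a₃ ∧
        a₀ ^ 2 + a₁ ^ 2 + a₂ ^ 2 + a₃ ^ 2 = 1 ∧
        a₀ ^ 2 + (a₁ ^ 2 + a₂ ^ 2 + a₃ ^ 2) / 3 = F ∧
        x = a₀ + a₁ + a₂ + a₃}
      (Real.sqrt ((3 * F - 1) / 2) + 3 * Real.sqrt ((1 - F) / 2)) ∧
    ∀ a₀ a₁ a₂ a₃ : ℝ,
      0 ≤ a₀ → 0 ≤ a₁ → 0 ≤ a₂ → 0 ≤ a₃ →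
      a₀ ^ 2 + a₁ ^ 2 + a₂ ^ 2 + a₃ ^ 2 = 1 →
      a₀ ^ 2 + (a₁ ^ 2 + a₂ ^ 2 + a₃ ^ 2) / 3 = F →
      (a₀ + a₁ + a₂ + a₃ = Real.sqrt ((3 * F - 1) / 2) + 3 * Real.sqrt ((1 - F) / 2) ↔
        a₀ = Real.sqrt ((3 * F - 1) / 2) ∧ a₁ = Real.sqrt ((1 - F) / 2) ∧
        a₂ = Real.sqrt ((1 - F) / 2) ∧ a₃ = Real.sqrt ((1 - F) / 2)) := by
  have hu0 : (0:ℝ) ≤ (3 * F - 1) / 2 := by linarith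
  have hv0 : (0:ℝ) ≤ (1 - F) / 2 := by linarith
  set u := Real.sqrt ((3 * F - 1) / 2) with hu
  set v := Real.sqrt ((1 - F) / 2) with hv
  have hun : 0 ≤ u := Real.sqrt_nonneg _
  have hvn : 0 ≤ v := Real.sqrt_nonneg _
  have hu2 : u ^ 2 = (3 * F - 1) / 2 := Real.sq_sqrt hu0
  have hv2 : v ^ 2 = (1 - F) / 2 := Real.sq_sqrt hv0
  -- key facts from the constraints
  have key : ∀ a₀ a₁ a₂ a₃ : ℝ, 0 ≤ a₀ → 0 ≤ a₁ → 0 ≤ a₂ → 0 ≤ a₃ →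
      a₀ ^ 2 + a₁ ^ 2 + a₂ ^ 2 + a₃ ^ 2 = 1 →
      a₀ ^ 2 + (a₁ ^ 2 + a₂ ^ 2 + a₃ ^ 2) / 3 = F →
      a₀ = u ∧ a₁ ^ 2 + a₂ ^ 2 + a₃ ^ 2 = 3 * v ^ 2 := by
    intro a₀ a₁ a₂ a₃ h0 h1 h2 h3 hs hf
    have ha0 : a₀ ^ 2 = (3 * F - 1) / 2 := by linarith
    constructor
    · rw [hu, ← ha0, Real.sqrt_sq h0]
    · rw [hv2]; linarith
  have bound : ∀ a₁ a₂ a₃ : ℝ, 0 ≤ a₁ → 0 ≤ a₂ → 0 ≤ a₃ →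
      a₁ ^ 2 + a₂ ^ 2 + a₃ ^ 2 = 3 * v ^ 2 → a₁ + a₂ + a₃ ≤ 3 * v := by
    intro a₁ a₂ a₃ h1 h2 h3 hs
    nlinarith [sq_nonneg (a₁ - a₂), sq_nonneg (a₂ - a₃), sq_nonneg (a₁ - a₃),
      sq_nonneg (a₁ + a₂ + a₃ - 3 * v), sq_nonneg (a₁ + a₂ + a₃ + 3 * v)]
  refine ⟨⟨⟨u, v, v, v, hun, hvn, hvn, hvn, by nlinarith, by nlinarith, by ring⟩, ?_⟩, ?_⟩
  · rintro x ⟨a₀, a₁, a₂, a₃, h0, h1, h2, h3, hs, hf, rfl⟩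
    obtain ⟨ha0, hrest⟩ := key a₀ a₁ a₂ a₃ h0 h1 h2 h3 hs hf
    have := bound a₁ a₂ a₃ h1 h2 h3 hrest
    linarith
  · intro a₀ a₁ a₂ a₃ h0 h1 h2 h3 hs hf
    obtain ⟨ha0, hrest⟩ := key a₀ a₁ a₂ a₃ h0 h1 h2 h3 hs hf
    constructor
    · intro heq
      have hsum : a₁ + a₂ + a₃ = 3 * v := by linarith
      have e : (a₁ - a₂) ^ 2 + (a₂ - a₃) ^ 2 + (a₁ - a₃) ^ 2 = 0 := by
        linear_combination 3 * hrest - (a₁ + a₂ + a₃ + 3 * v) * hsum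
      have e12 : (a₁ - a₂) ^ 2 = 0 := by
        linarith [sq_nonneg (a₁ - a₂), sq_nonneg (a₂ - a₃), sq_nonneg (a₁ - a₃)]
      have e23 : (a₂ - a₃) ^ 2 = 0 := by
        linarith [sq_nonneg (a₁ - a₂), sq_nonneg (a₂ - a₃), sq_nonneg (a₁ - a₃)]
      have h12 : a₁ = a₂ := sub_eq_zero.mp (pow_eq_zero_iff two_ne_zero |>.mp e12)
      have h23 : a₂ = a₃ := sub_eq_zero.mp (pow_eq_zero_iff two_ne_zero |>.mp e23)
      exact ⟨ha0, by linarith, by linarith, by linarith⟩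
    · rintro ⟨rfl, rfl, rfl, rfl⟩; ring
end

section
/- (Symmetric fidelity of the optimal cloner of two Fourier-transformed bases in dimension d.) For every integer d ≥ 2, the real number F = (1 + 1/√d)/2 is the unique solution in the interval [1/2, 1] of the equation F = F/d + (d − 1)(1 − F)/d + (2/d)·√((d − 1)·F·(1 − F)). -/
/-!
Clearing denominators turns the fixed-point equation into `√((d-1)F(1-F)) = (d-1)(2F-1)/2`.
On `[1/2, 1]` both sides are nonnegative, so it is equivalent to its square, which with
`t = 2F - 1` and `4F(1-F) = 1 - t²` factors as `(d-1)(d t² - 1) = 0`. Hence `t = 1/√d`.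
-/

noncomputable def eveFidelity (d F : ℝ) : ℝ :=
  F / d + (d - 1) * (1 - F) / d + (2 / d) * √((d - 1) * F * (1 - F))

theorem eq_eveFidelity_iff {d F : ℝ} (hd : 1 < d) (hF₁ : 1 / 2 ≤ F) (hF₂ : F ≤ 1) :
    F = eveFidelity d F ↔ d * (2 * F - 1) ^ 2 = 1 := by
  have hscale : (d - 1) / 4 ≠ 0 := (div_pos (sub_pos.2 hd) four_pos).ne'
  have hclear : F = eveFidelity d F ↔ √((d - 1) * F * (1 - F)) = (d - 1) * (2 * F - 1) / 2 := by
    unfold eveFidelity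
    constructor <;> intro h <;> field_simp at h ⊢ <;> linarith
  have hfactor : ((d - 1) * (2 * F - 1) / 2) ^ 2 - (d - 1) * F * (1 - F)
      = (d - 1) / 4 * (d * (2 * F - 1) ^ 2 - 1) := by ring
  have hradicand : 0 ≤ (d - 1) * F * (1 - F) :=
    mul_nonneg (mul_nonneg (by linarith) (by linarith)) (by linarith)
  have hrhs : 0 ≤ (d - 1) * (2 * F - 1) / 2 := by nlinarith
  rw [hclear, Real.sqrt_eq_iff_eq_sq hradicand hrhs, eq_comm, ← sub_eq_zero, hfactor,
    mul_eq_zero, or_iff_right hscale, sub_eq_zero]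

theorem mul_sq_eq_one_iff_eq_one_div_sqrt {d t : ℝ} (hd : 0 < d) (ht : 0 ≤ t) :
    d * t ^ 2 = 1 ↔ t = 1 / √d := by
  rw [one_div, ← Real.sqrt_inv, @eq_comm _ t, Real.sqrt_eq_iff_eq_sq (inv_nonneg.2 hd.le) ht,
    mul_eq_one_iff_inv_eq₀ hd.ne']

/-- Symmetric fidelity of the optimal cloner of two Fourier-transformed bases in
dimension `d`: `F = (1 + 1/√d)/2` is the unique solution in `[1/2, 1]` of
`F = F/d + (d−1)(1−F)/d + (2/d)·√((d−1)·F·(1−F))`. -/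
theorem fourier_bases_symmetric_fidelity (d : ℕ) (hd : 2 ≤ d) :
    ((1 : ℝ) / 2 ≤ (1 + 1 / Real.sqrt d) / 2 ∧ (1 + 1 / Real.sqrt d) / 2 ≤ 1 ∧
      (1 + 1 / Real.sqrt d) / 2 =
        ((1 + 1 / Real.sqrt d) / 2) / d +
          (d - 1) * (1 - (1 + 1 / Real.sqrt d) / 2) / d +
          (2 / d) * Real.sqrt
            ((d - 1) * ((1 + 1 / Real.sqrt d) / 2) * (1 - (1 + 1 / Real.sqrt d) / 2))) ∧
    ∀ F : ℝ, 1 / 2 ≤ F → F ≤ 1 →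
      F = F / d + (d - 1) * (1 - F) / d + (2 / d) * Real.sqrt ((d - 1) * F * (1 - F)) →
      F = (1 + 1 / Real.sqrt d) / 2 := by
  have hd₁ : (1 : ℝ) < d := by exact_mod_cast hd
  have hinv_nonneg : 0 ≤ 1 / √(d : ℝ) := by positivity
  have hinv_le_one : 1 / √(d : ℝ) ≤ 1 :=
    div_le_one_of_le₀ (Real.one_le_sqrt.2 hd₁.le) (Real.sqrt_nonneg _)
  have hfixed : ∀ F : ℝ, 1 / 2 ≤ F → F ≤ 1 →
      (F = eveFidelity d F ↔ F = (1 + 1 / √(d : ℝ)) / 2) := by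
    intro F hF₁ hF₂
    rw [eq_eveFidelity_iff hd₁ hF₁ hF₂,
      mul_sq_eq_one_iff_eq_one_div_sqrt (by linarith) (by linarith)]
    constructor <;> intro h <;> linarith
  exact ⟨⟨by linarith, by linarith, (hfixed _ (by linarith) (by linarith)).2 rfl⟩,
    fun F hF₁ hF₂ h => (hfixed F hF₁ hF₂).1 h⟩
end
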